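/- arXiv:1308.1338 — 3 statements merged into one kernel-verified Lean document; each statement's English description precedes it below -/
import Mathlib

section
/- For r > 1 and φ ∈ (-π/2, π/2), define the 2×2 real matrix D_{r,φ}(v) = (r/2)(I₂ + ((1-2/r)/cos φ) K(2ψ - φ)), where ψ is the polar angle of v ∈ ℝ² \ {0} and K(α) is the symmetric matrix with rows (cos α, sin α) and (sin α, -cos α). Then D_{r,φ}(v) induces a positive semidefinite quadratic form on ℝ² if and only if |φ| ≤ arctan(2√(r-1)/|r-2|) (interpreted as π/2 when r = 2). -/
/-! Since `D = (r/2) (I + c K)` with `c = (1 - 2/r) / cos φ` and `K` a reflection (eigenvalues `±1`),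
`D` is positive semidefinite exactly when `|c| ≤ 1`, i.e. `|1 - 2/r| ≤ cos φ`; by monotonicity of
`cos` on `[0, π]` this means `|φ| ≤ arccos |1 - 2/r| = φ_r`. -/

noncomputable section
open Real Matrix

def Kmat (α : ℝ) : Matrix (Fin 2) (Fin 2) ℝ :=
  !![Real.cos α, Real.sin α; Real.sin α, -Real.cos α]

def Omat (φ : ℝ) : Matrix (Fin 2) (Fin 2) ℝ :=
  !![Real.cos φ, -Real.sin φ; Real.sin φ, Real.cos φ]

def polarAngle (v : Fin 2 → ℝ) : ℝ := Complex.arg (⟨v 0, v 1⟩ : ℂ)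

/-- The matrix `D_{r,φ}(v)` of Bakry. -/
def Dmat (r φ : ℝ) (v : Fin 2 → ℝ) : Matrix (Fin 2) (Fin 2) ℝ :=
  (r / 2) • ((1 : Matrix (Fin 2) (Fin 2) ℝ) +
    ((1 - 2 / r) / Real.cos φ) • Kmat (2 * polarAngle v - φ))

lemma Kmat_isHermitian (θ : ℝ) : (Kmat θ).IsHermitian := by
  ext i j
  fin_cases i <;> fin_cases j <;> simp [Kmat]

lemma dotProduct_Kmat_mulVec (θ : ℝ) (x : Fin 2 → ℝ) :
    x ⬝ᵥ (Kmat θ *ᵥ x) = cos θ * (x 0 ^ 2 - x 1 ^ 2) + sin θ * (2 * x 0 * x 1) := by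
  simp [Kmat, dotProduct, mulVec, Fin.sum_univ_two]
  ring

lemma dotProduct_Kmat_mulVec_cos_sin (θ a : ℝ) :
    ![cos a, sin a] ⬝ᵥ (Kmat θ *ᵥ ![cos a, sin a]) = cos (θ - 2 * a) := by
  rw [dotProduct_Kmat_mulVec, cos_sub, cos_two_mul, sin_two_mul]
  simp only [cons_val_zero, cons_val_one]
  linear_combination (-cos θ) * sin_sq_add_cos_sq a

/-- The quadratic form of `Kmat θ` is the inner product of `(cos θ, sin θ)` with
`(x₀² - x₁², 2 x₀ x₁)`, a vector of length `x ⬝ᵥ x`. -/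
lemma abs_dotProduct_Kmat_mulVec_le (θ : ℝ) (x : Fin 2 → ℝ) :
    |x ⬝ᵥ (Kmat θ *ᵥ x)| ≤ x ⬝ᵥ x := by
  have lagrange : (x ⬝ᵥ x) ^ 2 - (x ⬝ᵥ (Kmat θ *ᵥ x)) ^ 2
      = (sin θ * (x 0 ^ 2 - x 1 ^ 2) - cos θ * (2 * x 0 * x 1)) ^ 2 := by
    rw [dotProduct_Kmat_mulVec]
    simp only [dotProduct, Fin.sum_univ_two]
    linear_combination (-(x 0 ^ 2 + x 1 ^ 2) ^ 2) * sin_sq_add_cos_sq θ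
  refine abs_le_of_sq_le_sq (sub_nonneg.1 (lagrange ▸ sq_nonneg _)) ?_
  simpa using dotProduct_self_star_nonneg x

lemma posSemidef_smul_one_add_smul_Kmat_iff {s : ℝ} (hs : 0 < s) (c θ : ℝ) :
    (s • ((1 : Matrix (Fin 2) (Fin 2) ℝ) + c • Kmat θ)).PosSemidef ↔ |c| ≤ 1 := by
  have quad : ∀ x : Fin 2 → ℝ, star x ⬝ᵥ ((s • (1 + c • Kmat θ)) *ᵥ x)
      = s * (x ⬝ᵥ x + c * (x ⬝ᵥ (Kmat θ *ᵥ x))) := fun x => by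
    simp only [star_trivial, smul_mulVec, add_mulVec, one_mulVec, dotProduct_smul,
      dotProduct_add, smul_eq_mul]
  rw [posSemidef_iff_dotProduct_mulVec, and_iff_right
    ((isHermitian_one.add ((Kmat_isHermitian θ).smul (.all c))).smul (.all s))]
  simp only [quad]
  constructor
  · intro h
    -- `(cos (θ/2), sin (θ/2))` and its rotation by `π/2` are eigenvectors of `Kmat θ` for `±1`.
    have eig (a : ℝ) : 0 ≤ 1 + c * cos (θ - 2 * a) := by
      have := h ![cos a, sin a]
      rw [dotProduct_Kmat_mulVec_cos_sin] at this
      simpa [dotProduct, Fin.sum_univ_two, hs, ← sq, cos_sq_add_sin_sq] using this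
    have plus := eig (θ / 2)
    have minus := eig (θ / 2 - π / 2)
    rw [show θ - 2 * (θ / 2) = 0 by ring, cos_zero] at plus
    rw [show θ - 2 * (θ / 2 - π / 2) = π by ring, cos_pi] at minus
    exact abs_le.2 ⟨by linarith, by linarith⟩
  · intro hc x
    have : |c * (x ⬝ᵥ (Kmat θ *ᵥ x))| ≤ x ⬝ᵥ x := by
      rw [abs_mul, ← one_mul (x ⬝ᵥ x)]
      exact mul_le_mul hc (abs_dotProduct_Kmat_mulVec_le θ x) (abs_nonneg _) zero_le_one
    exact mul_nonneg hs.le (by linarith [neg_abs_le (c * (x ⬝ᵥ (Kmat θ *ᵥ x)))])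

lemma le_arccos_iff_le_cos {x y : ℝ} (hx₁ : -1 ≤ x) (hx₂ : x ≤ 1) (hy₀ : 0 ≤ y) (hy₁ : y ≤ π) :
    y ≤ arccos x ↔ x ≤ cos y := by
  conv_rhs => rw [← cos_arccos hx₁ hx₂]
  exact (strictAntiOn_cos.le_iff_ge ⟨arccos_nonneg x, arccos_le_pi x⟩ ⟨hy₀, hy₁⟩).symm

lemma arccos_abs_one_sub_two_div {r : ℝ} (hr : 1 < r) :
    arccos |1 - 2 / r| = if r = 2 then π / 2 else arctan (2 * √(r - 1) / |r - 2|) := by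
  have hr0 : 0 < r := by linarith
  have habs : |1 - 2 / r| = |r - 2| / r := by
    rw [show 1 - 2 / r = (r - 2) / r by field_simp, abs_div, abs_of_pos hr0]
  split_ifs with h2
  · simp [h2, arccos_zero]
  have hpos : 0 < |r - 2| := abs_pos.2 (sub_ne_zero.2 h2)
  have hsqrt : √(1 - (|r - 2| / r) ^ 2) = 2 * √(r - 1) / r := by
    rw [show 1 - (|r - 2| / r) ^ 2 = (2 * √(r - 1) / r) ^ 2 by
      rw [div_pow, div_pow, mul_pow, sq_sqrt (by linarith), sq_abs]; field_simp; ring]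
    exact sqrt_sq (by positivity)
  rw [habs, arccos_eq_arctan (by positivity), hsqrt]
  congr 1
  field_simp

theorem stmt0_general (r φ : ℝ) (hr : 1 < r) (hφ : φ ∈ Set.Ioo (-(π / 2)) (π / 2))
    (v : Fin 2 → ℝ) :
    (Dmat r φ v).PosSemidef ↔
      |φ| ≤ if r = 2 then π / 2 else Real.arctan (2 * Real.sqrt (r - 1) / |r - 2|) := by
  have hcos : 0 < cos φ := cos_pos_of_mem_Ioo hφ
  have hφπ : |φ| ≤ π := by linarith [abs_lt.2 ⟨hφ.1, hφ.2⟩, pi_pos]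
  have h2r : 0 < 2 / r ∧ 2 / r < 2 :=
    ⟨by positivity, by rw [div_lt_iff₀ (by linarith)]; linarith⟩
  have hle : |1 - 2 / r| ≤ 1 := abs_le.2 ⟨by linarith, by linarith⟩
  rw [Dmat, posSemidef_smul_one_add_smul_Kmat_iff (by linarith), abs_div, abs_of_pos hcos,
    div_le_one hcos, ← arccos_abs_one_sub_two_div hr,
    le_arccos_iff_le_cos (by linarith [abs_nonneg (1 - 2 / r)]) hle (abs_nonneg φ) hφπ, cos_abs]

theorem stmt0 (r φ : ℝ) (hr : 1 < r) (hφ : φ ∈ Set.Ioo (-(π / 2)) (π / 2))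
    (v : Fin 2 → ℝ) (hv : v ≠ 0) :
    (Dmat r φ v).PosSemidef ↔
      |φ| ≤ if r = 2 then π / 2 else Real.arctan (2 * Real.sqrt (r - 1) / |r - 2|) :=
  stmt0_general r φ hr hφ v
end
end

section
/- Let p > 2, q = p/(p-1), ε ∈ (0, 1/2), q_ε = p_ε/(p_ε - 1) where p_ε = (p-2ε)/(1-ε). Then for v ∈ ℝ² \ {0} and φ ∈ (-π/2, π/2): D_{q,φ}(v) = ε(q-1) I₂ + (1 - ε(q-1)) D_{q_ε,φ}(v). -/
noncomputable section
open Real Matrix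

set_option maxHeartbeats 1000000 in
theorem stmt3 (p ε φ : ℝ) (hp : 2 < p) (hε : ε ∈ Set.Ioo (0 : ℝ) (1 / 2))
    (hφ : φ ∈ Set.Ioo (-(π / 2)) (π / 2)) (v : Fin 2 → ℝ) (hv : v ≠ 0)
    (q pε qε : ℝ) (hq : q = p / (p - 1)) (hpε : pε = (p - 2 * ε) / (1 - ε))
    (hqε : qε = pε / (pε - 1)) :
    Dmat q φ v =
      (ε * (q - 1)) • (1 : Matrix (Fin 2) (Fin 2) ℝ) + (1 - ε * (q - 1)) • Dmat qε φ v := by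
  obtain ⟨hε0, hε2⟩ := hε
  have h1 : p - 1 ≠ 0 := by nlinarith
  have h2 : 1 - ε ≠ 0 := by nlinarith
  have h3 : p - 1 - ε ≠ 0 := by nlinarith
  have h4 : p - 2 * ε ≠ 0 := by nlinarith
  have hcos : Real.cos φ ≠ 0 := by
    have := Real.cos_pos_of_mem_Ioo hφ
    linarith
  have hpε1 : pε - 1 = (p - 1 - ε) / (1 - ε) := by rw [hpε]; field_simp; ring
  have hqε' : qε = (p - 2 * ε) / (p - 1 - ε) := by
    rw [hqε, hpε1, hpε]
    field_simp
  have hq0 : q ≠ 0 := by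
    rw [hq]; positivity
  have hqε0 : qε ≠ 0 := by
    rw [hqε']
    have : 0 < p - 2 * ε := by nlinarith
    have : 0 < p - 1 - ε := by nlinarith
    positivity
  subst hq hqε'
  ext i j
  fin_cases i <;> fin_cases j <;>
    simp [Dmat, Kmat, Matrix.one_apply, Matrix.add_apply, Matrix.smul_apply] <;>
    field_simp <;> ring
end
end

section
/- For every p > 2 and every ε ∈ (0, 1/2), with p_ε = (p-2ε)/(1-ε), one has arcsin(1 - 2/p_ε) ≤ arcsin(1 - 2/p) + (2(p-2)/(p√(p-1))) ε. -/
/-!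
The derivative `1 / √(1 - t²)` of `arcsin` increases on `[0, 1)`, so by the mean value theorem
`arcsin y - arcsin x ≤ (y - x) / √(1 - y²)` for `x = 1 - 2/p ≤ y = 1 - 2/p_ε`. Here
`y - x = 2ε(p - 2) / (p(p - 2ε))`, and `√(1 - y²) ≥ √(p - 1) / (p - 2ε)` as long as `ε ≤ 1/2`;
the factors `p - 2ε` cancel.
-/

open Real

theorem arcsin_sub_arcsin_le {x y : ℝ} (hx : 0 ≤ x) (hxy : x ≤ y) (hy : y < 1) :
    arcsin y - arcsin x ≤ (y - x) / √(1 - y ^ 2) := by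
  have hderiv : ∀ c ∈ interior (Set.Icc x y), deriv arcsin c ≤ 1 / √(1 - y ^ 2) := by
    rw [interior_Icc]
    rintro c ⟨hxc, hcy⟩
    rw [deriv_arcsin]
    have hy2 : 0 < 1 - y ^ 2 := by nlinarith
    gcongr 1 / √?_
    nlinarith
  have hdiff : DifferentiableOn ℝ arcsin (interior (Set.Icc x y)) := by
    rw [interior_Icc]
    exact fun c ⟨hxc, hcy⟩ =>
      (differentiableAt_arcsin.2 ⟨by linarith, by linarith⟩).differentiableWithinAt
  have := (convex_Icc x y).image_sub_le_mul_sub_of_deriv_le continuous_arcsin.continuousOn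
    hdiff hderiv x (Set.left_mem_Icc.2 hxy) y (Set.right_mem_Icc.2 hxy) hxy
  rwa [one_div_mul_eq_div] at this

theorem sqrt_sub_one_div_le_sqrt_one_sub_sq {p ε : ℝ} (hp : 2 < p) (hε₀ : 0 < ε) (hε : ε < 1 / 2) :
    √(p - 1) / (p - 2 * ε) ≤ √(1 - (1 - 2 / ((p - 2 * ε) / (1 - ε))) ^ 2) := by
  have hpε : 0 < p - 2 * ε := by linarith
  have h1ε : 0 < 1 - ε := by linarith
  have hform : 1 - (1 - 2 / ((p - 2 * ε) / (1 - ε))) ^ 2 =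
      4 * (1 - ε) * (p - 1 - ε) / (p - 2 * ε) ^ 2 := by
    field_simp; ring
  rw [hform, sqrt_div' _ (sq_nonneg _), sqrt_sq hpε.le]
  gcongr
  -- `4(1 - ε)(p - 1 - ε) - (p - 1) = (p - 2)(3 - 4ε) + (1 - 2ε)(3 - 2ε)`
  linarith [mul_nonneg (by linarith : (0:ℝ) ≤ p - 2) (by linarith : (0:ℝ) ≤ 3 - 4 * ε),
    mul_nonneg (by linarith : (0:ℝ) ≤ 1 - 2 * ε) (by linarith : (0:ℝ) ≤ 3 - 2 * ε)]

theorem stmt5 (p ε : ℝ) (hp : 2 < p) (hε : ε ∈ Set.Ioo (0 : ℝ) (1 / 2)) :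
    Real.arcsin (1 - 2 / ((p - 2 * ε) / (1 - ε))) ≤
      Real.arcsin (1 - 2 / p) + (2 * (p - 2) / (p * Real.sqrt (p - 1))) * ε := by
  obtain ⟨hε₀, hε⟩ := hε
  set x := 1 - 2 / p with hx_def
  set y := 1 - 2 / ((p - 2 * ε) / (1 - ε)) with hy_def
  have hpε : 0 < p - 2 * ε := by linarith
  have hx : 0 ≤ x := by rw [sub_nonneg, div_le_one (by linarith)]; linarith
  have hy : y < 1 := by
    rw [hy_def]
    have : 0 < 2 / ((p - 2 * ε) / (1 - ε)) := div_pos two_pos (div_pos hpε (by linarith))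
    linarith
  have hyx : y - x = 2 * ε * (p - 2) / (p * (p - 2 * ε)) := by
    have : 1 - ε ≠ 0 := by linarith
    rw [hx_def, hy_def]; field_simp; ring
  have hxy : x ≤ y := by
    rw [← sub_nonneg, hyx]; exact div_nonneg (by nlinarith) (by nlinarith)
  have hsqrt : 0 < √(p - 1) := sqrt_pos.2 (by linarith)
  calc arcsin y ≤ arcsin x + (y - x) / √(1 - y ^ 2) := by
        linarith [arcsin_sub_arcsin_le hx hxy hy]
    _ ≤ arcsin x + (y - x) / (√(p - 1) / (p - 2 * ε)) := by
        gcongr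
        exact sqrt_sub_one_div_le_sqrt_one_sub_sq hp hε₀ hε
    _ = arcsin x + 2 * (p - 2) / (p * √(p - 1)) * ε := by
        rw [hyx]; field_simp
end
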